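/- arXiv:2110.12239 — 2 statements merged into one kernel-verified Lean document; each statement's English description precedes it below -/
import Mathlib

section
/- Let P be a convex compact subset of R^n, ψ: P → R a σ-strongly convex differentiable function with Bregman divergence D(x‖y) = ψ(x) − ψ(y) − ⟨∇ψ(y), x − y⟩, J: P → R a convex differentiable function with ‖∇J(x)‖ ≤ G_J for all x ∈ P, and M = (1/2)·max_{x∈P} ‖∇ψ(x)‖. Let Φ: P → P be any map, let η̃_t ∈ P, and define η̃_{t+1} = Φ(argmin_{η∈P} [α⟨∇J(η̃_t), η⟩ + D(η‖η̃_t)]) for step size α > 0. Then for any comparator points η_t, η_{t+1} ∈ P, J(η̃_t) − J(η_t) ≤ (1/α)[D(η_t‖η̃_t) − D(η_{t+1}‖η̃_{t+1})] + (1/α)·Δ_Φ + (4M/α)·‖η_{t+1} − Φ(η_t)‖ + (α/(2σ))·G_J², where Δ_Φ = max_{x,y∈P} [D(Φ(x)‖Φ(y)) − D(x‖y)]. -/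
open scoped RealInnerProductSpace

/-- Bregman divergence of `ψ` with (formal) gradient `ψ'`. -/
noncomputable def bregman {n : ℕ} (ψ : EuclideanSpace ℝ (Fin n) → ℝ)
    (ψ' : EuclideanSpace ℝ (Fin n) → EuclideanSpace ℝ (Fin n))
    (x y : EuclideanSpace ℝ (Fin n)) : ℝ :=
  ψ x - ψ y - ⟪ψ' y, x - y⟫

/-! The first-order optimality condition of the proximal step, rewritten with the three-point
identity of the Bregman divergence, bounds `α⟪∇J(η̃_t), η̂_t - η_t⟫` by
`D(η_t ‖ η̃_t) - D(η_t ‖ η̂_t) - D(η̂_t ‖ η̃_t)`. By convexity of `J` it remains to control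
`α⟪∇J(η̃_t), η̃_t - η̂_t⟫ - D(η̂_t ‖ η̃_t)`, which strong convexity and Young's inequality bound by
`α² G_J² / (2σ)`. Finally `D(η_t ‖ η̂_t)` is traded for `D(η_{t+1} ‖ Φ η̂_t)`: applying `Φ` to both
arguments costs `Δ_Φ`, and replacing `Φ η_t` by `η_{t+1}` in the first argument costs at most
`(‖∇ψ(η_{t+1})‖ + ‖∇ψ(Φ η̂_t)‖) ‖η_{t+1} - Φ η_t‖ ≤ 4M ‖η_{t+1} - Φ η_t‖`. -/

theorem IsMinOn.hasFDerivAt_nonneg_of_convex {E : Type*} [NormedAddCommGroup E] [NormedSpace ℝ E]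
    {f : E → ℝ} {f' : E →L[ℝ] ℝ} {s : Set E} {a b : E} (h : IsMinOn f s a) (hs : Convex ℝ s)
    (hf : HasFDerivAt f f' a) (ha : a ∈ s) (hb : b ∈ s) : 0 ≤ f' (b - a) :=
  h.localize.hasFDerivWithinAt_nonneg hf.hasFDerivWithinAt
    (sub_mem_posTangentConeAt_of_segment_subset (hs.segment_subset ha hb))

lemma mul_sub_half_mul_sq_le {a r σ : ℝ} (hσ : 0 < σ) :
    a * r - σ / 2 * r ^ 2 ≤ a ^ 2 / (2 * σ) := by
  rw [le_div_iff₀ (by positivity)]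
  nlinarith [sq_nonneg (a - σ * r)]

section Bregman

variable {n : ℕ} {ψ : EuclideanSpace ℝ (Fin n) → ℝ}
  {ψ' : EuclideanSpace ℝ (Fin n) → EuclideanSpace ℝ (Fin n)}

lemma bregman_three_point (x y z : EuclideanSpace ℝ (Fin n)) :
    bregman ψ ψ' x z - bregman ψ ψ' x y - bregman ψ ψ' y z = ⟪ψ' y - ψ' z, x - y⟫ := by
  simp only [bregman, inner_sub_left, inner_sub_right]
  ring

lemma hasFDerivAt_bregman_left {x : EuclideanSpace ℝ (Fin n)} (y : EuclideanSpace ℝ (Fin n))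
    (hψ : HasGradientAt ψ (ψ' x) x) :
    HasFDerivAt (fun z => bregman ψ ψ' z y) (innerSL ℝ (ψ' x - ψ' y)) x := by
  have hlin : HasFDerivAt (fun z => ⟪ψ' y, z - y⟫) (innerSL ℝ (ψ' y)) x := by
    simpa only [innerSL_apply_apply, inner_sub_right] using
      (innerSL ℝ (ψ' y)).hasFDerivAt.sub_const ⟪ψ' y, y⟫
  have hdual :
      InnerProductSpace.toDual ℝ _ (ψ' x) - innerSL ℝ (ψ' y) = innerSL ℝ (ψ' x - ψ' y) := by
    ext v
    simp
  exact hdual ▸ ((hasGradientAt_iff_hasFDerivAt.mp hψ).sub_const (ψ y)).sub hlin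

lemma half_mul_sq_norm_sub_le_bregman {σ : ℝ} {x y : EuclideanSpace ℝ (Fin n)}
    (hψ : ψ x ≥ ψ y + ⟪ψ' y, x - y⟫ + σ / 2 * ‖x - y‖ ^ 2) :
    σ / 2 * ‖x - y‖ ^ 2 ≤ bregman ψ ψ' x y := by
  rw [bregman]
  linarith

lemma inner_sub_le_of_isMinOn_bregman {P : Set (EuclideanSpace ℝ (Fin n))} (hP : Convex ℝ P)
    {α : ℝ} {g x p u : EuclideanSpace ℝ (Fin n)} (hψ : HasGradientAt ψ (ψ' p) p) (hp : p ∈ P)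
    (hmin : ∀ η ∈ P, α * ⟪g, p⟫ + bregman ψ ψ' p x ≤ α * ⟪g, η⟫ + bregman ψ ψ' η x)
    (hu : u ∈ P) :
    α * ⟪g, p - u⟫ ≤ bregman ψ ψ' u x - bregman ψ ψ' u p - bregman ψ ψ' p x := by
  have hderiv := ((innerSL ℝ g).hasFDerivAt.const_mul α).add (hasFDerivAt_bregman_left x hψ)
  have hopt := IsMinOn.hasFDerivAt_nonneg_of_convex
    (f := fun η => α * ⟪g, η⟫ + bregman ψ ψ' η x) hmin hP hderiv hp hu
  simp only [add_apply, smul_apply, innerSL_apply_apply, smul_eq_mul] at hopt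
  rw [bregman_three_point u p x, ← neg_sub u p, inner_neg_right]
  linarith

lemma bregman_sub_bregman_le {u v : EuclideanSpace ℝ (Fin n)} (w : EuclideanSpace ℝ (Fin n))
    (hvu : 0 ≤ bregman ψ ψ' v u) :
    bregman ψ ψ' u w - bregman ψ ψ' v w ≤ (‖ψ' u‖ + ‖ψ' w‖) * ‖u - v‖ := by
  have h3 := bregman_three_point (ψ := ψ) (ψ' := ψ') v u w
  have hcs := real_inner_le_norm (ψ' u - ψ' w) (u - v)
  have hnorm := mul_le_mul_of_nonneg_right (norm_sub_le (ψ' u) (ψ' w)) (norm_nonneg (u - v))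
  rw [← neg_sub u v, inner_neg_right] at h3
  linarith

end Bregman

theorem dmd_per_step_lemma_general {n : ℕ}
    (P : Set (EuclideanSpace ℝ (Fin n))) (hPconv : Convex ℝ P)
    (ψ J : EuclideanSpace ℝ (Fin n) → ℝ)
    (ψ' J' : EuclideanSpace ℝ (Fin n) → EuclideanSpace ℝ (Fin n))
    (σ G_J M ΔΦ α : ℝ) (hσ : 0 < σ) (hα : 0 < α)
    -- ψ is σ-strongly convex on P with gradient ψ'
    (hψgrad : ∀ x ∈ P, HasGradientAt ψ (ψ' x) x)
    (hψsc : ∀ x ∈ P, ∀ y ∈ P,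
      ψ x ≥ ψ y + ⟪ψ' y, x - y⟫ + (σ / 2) * ‖x - y‖ ^ 2)
    -- J is convex and differentiable on P with bounded gradient
    (hJconv : ∀ x ∈ P, ∀ y ∈ P, J x - J y ≤ ⟪J' x, x - y⟫)
    (hGJ : ∀ x ∈ P, ‖J' x‖ ≤ G_J)
    -- M = (1/2) max over P of ‖∇ψ‖
    (hM : ∀ x ∈ P, ‖ψ' x‖ ≤ 2 * M)
    -- the shift operator Φ and its divergence-expansion bound Δ_Φ
    (Φ : EuclideanSpace ℝ (Fin n) → EuclideanSpace ℝ (Fin n))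
    (hΦ : ∀ x ∈ P, Φ x ∈ P)
    (hΔΦ : ∀ x ∈ P, ∀ y ∈ P,
      bregman ψ ψ' (Φ x) (Φ y) - bregman ψ ψ' x y ≤ ΔΦ)
    -- current iterate, the mirror-descent argmin ηhat, and the shifted next iterate
    (ηtil ηhat : EuclideanSpace ℝ (Fin n))
    (hηtil : ηtil ∈ P) (hηhatP : ηhat ∈ P)
    (hargmin : ∀ η ∈ P,
      α * ⟪J' ηtil, ηhat⟫ + bregman ψ ψ' ηhat ηtil ≤
      α * ⟪J' ηtil, η⟫ + bregman ψ ψ' η ηtil)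
    -- comparator points
    (ηt ηt1 : EuclideanSpace ℝ (Fin n)) (hηt : ηt ∈ P) (hηt1 : ηt1 ∈ P) :
    J ηtil - J ηt ≤
      (1 / α) * (bregman ψ ψ' ηt ηtil - bregman ψ ψ' ηt1 (Φ ηhat))
      + ΔΦ / α + (4 * M / α) * ‖ηt1 - Φ ηt‖ + (α / (2 * σ)) * G_J ^ 2 := by
  set g := J' ηtil
  set r := ‖ηhat - ηtil‖
  have hprox := inner_sub_le_of_isMinOn_bregman hPconv (hψgrad ηhat hηhatP) hηhatP hargmin hηt
  have hsc := half_mul_sq_norm_sub_le_bregman (hψsc ηhat hηhatP ηtil hηtil)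
  have hgap : ⟪g, ηtil - ηhat⟫ ≤ G_J * r :=
    calc ⟪g, ηtil - ηhat⟫ ≤ ‖g‖ * ‖ηtil - ηhat‖ := real_inner_le_norm _ _
      _ ≤ G_J * r := by rw [norm_sub_rev]; gcongr; exact hGJ ηtil hηtil
  have hyoung : α * G_J * r - σ / 2 * r ^ 2 ≤ α ^ 2 / (2 * σ) * G_J ^ 2 := by
    convert mul_sub_half_mul_sq_le hσ using 1
    ring
  have hshift := hΔΦ ηt hηt ηhat hηhatP
  have hD_nonneg : 0 ≤ bregman ψ ψ' (Φ ηt) ηt1 :=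
    (mul_nonneg (half_pos hσ).le (sq_nonneg _)).trans
      (half_mul_sq_norm_sub_le_bregman (hψsc _ (hΦ ηt hηt) ηt1 hηt1))
  have hswap := bregman_sub_bregman_le (Φ ηhat) hD_nonneg
  have hψ'bound := mul_le_mul_of_nonneg_right
    (add_le_add (hM ηt1 hηt1) (hM _ (hΦ ηhat hηhatP))) (norm_nonneg (ηt1 - Φ ηt))
  have hJ := mul_le_mul_of_nonneg_left (hJconv ηtil hηtil ηt hηt) hα.le
  have hsplit : α * ⟪g, ηtil - ηt⟫ = α * ⟪g, ηtil - ηhat⟫ + α * ⟪g, ηhat - ηt⟫ := by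
    rw [← mul_add, ← inner_add_right, sub_add_sub_cancel]
  have hcomb : α * (J ηtil - J ηt) ≤ bregman ψ ψ' ηt ηtil - bregman ψ ψ' ηt1 (Φ ηhat) + ΔΦ
      + 4 * M * ‖ηt1 - Φ ηt‖ + α ^ 2 / (2 * σ) * G_J ^ 2 := by
    linarith [mul_le_mul_of_nonneg_left hgap hα.le]
  have hdiv := div_le_div_of_nonneg_right hcomb hα.le
  rw [mul_div_cancel_left₀ _ hα.ne'] at hdiv
  refine hdiv.trans_eq ?_
  field_simp

/-- Per-step dynamic mirror descent lemma. -/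
theorem dmd_per_step_lemma {n : ℕ}
    (P : Set (EuclideanSpace ℝ (Fin n))) (hPconv : Convex ℝ P) (hPcomp : IsCompact P)
    (ψ J : EuclideanSpace ℝ (Fin n) → ℝ)
    (ψ' J' : EuclideanSpace ℝ (Fin n) → EuclideanSpace ℝ (Fin n))
    (σ G_J M ΔΦ α : ℝ) (hσ : 0 < σ) (hα : 0 < α)
    -- ψ is σ-strongly convex on P with gradient ψ'
    (hψgrad : ∀ x ∈ P, HasGradientAt ψ (ψ' x) x)
    (hψsc : ∀ x ∈ P, ∀ y ∈ P,
      ψ x ≥ ψ y + ⟪ψ' y, x - y⟫ + (σ / 2) * ‖x - y‖ ^ 2)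
    -- J is convex and differentiable on P with bounded gradient
    (hJgrad : ∀ x ∈ P, HasGradientAt J (J' x) x)
    (hJconv : ∀ x ∈ P, ∀ y ∈ P, J x - J y ≤ ⟪J' x, x - y⟫)
    (hGJ : ∀ x ∈ P, ‖J' x‖ ≤ G_J)
    -- M = (1/2) max over P of ‖∇ψ‖
    (hM : ∀ x ∈ P, ‖ψ' x‖ ≤ 2 * M)
    -- the shift operator Φ and its divergence-expansion bound Δ_Φ
    (Φ : EuclideanSpace ℝ (Fin n) → EuclideanSpace ℝ (Fin n))
    (hΦ : ∀ x ∈ P, Φ x ∈ P)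
    (hΔΦ : ∀ x ∈ P, ∀ y ∈ P,
      bregman ψ ψ' (Φ x) (Φ y) - bregman ψ ψ' x y ≤ ΔΦ)
    -- current iterate, the mirror-descent argmin ηhat, and the shifted next iterate
    (ηtil ηhat : EuclideanSpace ℝ (Fin n))
    (hηtil : ηtil ∈ P) (hηhatP : ηhat ∈ P)
    (hargmin : ∀ η ∈ P,
      α * ⟪J' ηtil, ηhat⟫ + bregman ψ ψ' ηhat ηtil ≤
      α * ⟪J' ηtil, η⟫ + bregman ψ ψ' η ηtil)
    -- comparator points
    (ηt ηt1 : EuclideanSpace ℝ (Fin n)) (hηt : ηt ∈ P) (hηt1 : ηt1 ∈ P) :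
    J ηtil - J ηt ≤
      (1 / α) * (bregman ψ ψ' ηt ηtil - bregman ψ ψ' ηt1 (Φ ηhat))
      + ΔΦ / α + (4 * M / α) * ‖ηt1 - Φ ηt‖ + (α / (2 * σ)) * G_J ^ 2 :=
  dmd_per_step_lemma_general P hPconv ψ J ψ' J' σ G_J M ΔΦ α hσ hα hψgrad hψsc hJconv hGJ hM Φ hΦ
    hΔΦ ηtil ηhat hηtil hηhatP hargmin ηt ηt1 hηt hηt1
end

section
/- Let J be convex and differentiable on convex P with ‖∇J‖ ≤ G_J, let ψ be σ-strongly convex with Bregman divergence D, let α > 0, and let η̂ = argmin_{η∈P}[α⟨∇J(η̃), η⟩ + D(η‖η̃)]. Then for every η ∈ P: J(η̃) − J(η) ≤ (1/α)[D(η‖η̃) − D(η‖η̂)] + (α/(2σ))·G_J². -/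
/-!
Convexity bounds `J η̃ - J η` by `⟪∇J(η̃), η̃ - η⟫`; split `η̃ - η = (η̃ - η̂) + (η̂ - η)`.
First-order optimality of `η̂` on the convex set `P`, rewritten by the three-point identity of the
Bregman divergence, bounds `α ⟪∇J(η̃), η̂ - η⟫` by `D(η‖η̃) - D(η‖η̂) - D(η̂‖η̃)`. Young's inequality
bounds the remaining term by `α G² / (2σ) + σ ‖η̃ - η̂‖² / (2α)`, and strong convexity of `ψ`
absorbs the last summand into `D(η̂‖η̃) / α`.
-/

open scoped RealInnerProductSpace

section Bregman

variable {E : Type*} [NormedAddCommGroup E] [InnerProductSpace ℝ E]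

def bregmanDiv (ψ : E → ℝ) (ψ' : E → E) (x y : E) : ℝ :=
  ψ x - ψ y - ⟪ψ' y, x - y⟫

theorem inner_sub_sub_eq_bregmanDiv (ψ : E → ℝ) (ψ' : E → E) (x y z : E) :
    ⟪ψ' z - ψ' y, x - z⟫ =
      bregmanDiv ψ ψ' x y - bregmanDiv ψ ψ' x z - bregmanDiv ψ ψ' z y := by
  simp only [bregmanDiv, inner_sub_left, inner_sub_right]
  ring

theorem real_inner_le_young {α σ : ℝ} (hα : 0 < α) (hσ : 0 < σ) (u v : E) :
    ⟪u, v⟫ ≤ α / (2 * σ) * ‖u‖ ^ 2 + σ / (2 * α) * ‖v‖ ^ 2 := by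
  have hsq : 0 ≤ (α * ‖u‖ - σ * ‖v‖) ^ 2 / (2 * α * σ) := by positivity
  have hexp : (α * ‖u‖ - σ * ‖v‖) ^ 2 / (2 * α * σ) =
      α / (2 * σ) * ‖u‖ ^ 2 + σ / (2 * α) * ‖v‖ ^ 2 - ‖u‖ * ‖v‖ := by
    field_simp
    ring
  linarith [real_inner_le_norm u v]

variable [CompleteSpace E]

theorem IsMinOn.inner_gradient_nonneg {f : E → ℝ} {f' : E} {s : Set E} {x y : E}
    (hmin : IsMinOn f s x) (hs : Convex ℝ s) (hx : x ∈ s) (hy : y ∈ s)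
    (hf : HasGradientAt f f' x) : 0 ≤ ⟪f', y - x⟫ := by
  simpa using hmin.localize.hasFDerivWithinAt_nonneg hf.hasFDerivAt.hasFDerivWithinAt
    (sub_mem_posTangentConeAt_of_segment_subset (hs.segment_subset hx hy))

theorem HasGradientAt.bregmanDiv_left {ψ : E → ℝ} {ψ' : E → E} {x : E}
    (hψ : HasGradientAt ψ (ψ' x) x) (y : E) :
    HasGradientAt (fun z => bregmanDiv ψ ψ' z y) (ψ' x - ψ' y) x := by
  rw [hasGradientAt_iff_hasFDerivAt] at hψ ⊢
  rw [map_sub]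
  have hlin : HasFDerivAt (fun z => ⟪ψ' y, z - y⟫) (InnerProductSpace.toDual ℝ E (ψ' y)) x :=
    ((InnerProductSpace.toDual ℝ E (ψ' y)).hasFDerivAt.sub_const ⟪ψ' y, y⟫).congr_of_eventuallyEq
      (.of_forall fun z => by simp [inner_sub_right])
  exact (hψ.sub_const (ψ y)).sub hlin

theorem HasGradientAt.mirror_objective {ψ : E → ℝ} {ψ' : E → E} {x : E}
    (hψ : HasGradientAt ψ (ψ' x) x) (α : ℝ) (g y : E) :
    HasGradientAt (fun z => α * ⟪g, z⟫ + bregmanDiv ψ ψ' z y) (α • g + (ψ' x - ψ' y)) x := by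
  have hlin : HasFDerivAt (fun z => α * ⟪g, z⟫) (InnerProductSpace.toDual ℝ E (α • g)) x := by
    rw [map_smul]
    exact (InnerProductSpace.toDual ℝ E g).hasFDerivAt.const_mul α
  rw [hasGradientAt_iff_hasFDerivAt, map_add]
  exact hlin.add (hasGradientAt_iff_hasFDerivAt.mp (hψ.bregmanDiv_left y))

theorem IsMinOn.mirror_step_three_point {P : Set E} (hP : Convex ℝ P) {ψ : E → ℝ} {ψ' : E → E}
    {α : ℝ} {g ηtil ηhat η : E} (hψ : HasGradientAt ψ (ψ' ηhat) ηhat)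
    (hmin : IsMinOn (fun z => α * ⟪g, z⟫ + bregmanDiv ψ ψ' z ηtil) P ηhat)
    (hηhat : ηhat ∈ P) (hη : η ∈ P) :
    α * ⟪g, ηhat - η⟫ ≤
      bregmanDiv ψ ψ' η ηtil - bregmanDiv ψ ψ' η ηhat - bregmanDiv ψ ψ' ηhat ηtil := by
  have hopt := hmin.inner_gradient_nonneg hP hηhat hη (hψ.mirror_objective α g ηtil)
  rw [inner_add_left, real_inner_smul_left, inner_sub_sub_eq_bregmanDiv,
    ← neg_sub ηhat η, inner_neg_right] at hopt
  linarith

end Bregman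

theorem mirror_descent_one_step_bound_general {n : ℕ}
    (P : Set (EuclideanSpace ℝ (Fin n))) (hPconv : Convex ℝ P)
    (ψ J : EuclideanSpace ℝ (Fin n) → ℝ)
    (ψ' J' : EuclideanSpace ℝ (Fin n) → EuclideanSpace ℝ (Fin n))
    (σ G_J α : ℝ) (hσ : 0 < σ) (hα : 0 < α)
    (hψgrad : ∀ x ∈ P, HasGradientAt ψ (ψ' x) x)
    (hψsc : ∀ x ∈ P, ∀ y ∈ P,
      ψ x ≥ ψ y + ⟪ψ' y, x - y⟫ + (σ / 2) * ‖x - y‖ ^ 2)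
    (hJconv : ∀ x ∈ P, ∀ y ∈ P, J x - J y ≤ ⟪J' x, x - y⟫)
    (hGJ : ∀ x ∈ P, ‖J' x‖ ≤ G_J)
    (D : EuclideanSpace ℝ (Fin n) → EuclideanSpace ℝ (Fin n) → ℝ)
    (hD : ∀ x y, D x y = ψ x - ψ y - ⟪ψ' y, x - y⟫)
    (ηtil ηhat : EuclideanSpace ℝ (Fin n)) (hηtil : ηtil ∈ P) (hηhat : ηhat ∈ P)
    (hargmin : ∀ η ∈ P,
      α * ⟪J' ηtil, ηhat⟫ + D ηhat ηtil ≤ α * ⟪J' ηtil, η⟫ + D η ηtil) :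
    ∀ η ∈ P, J ηtil - J η ≤
      (1 / α) * (D η ηtil - D η ηhat) + (α / (2 * σ)) * G_J ^ 2 := by
  intro η hη
  obtain rfl : D = bregmanDiv ψ ψ' := funext fun x => funext (hD x)
  have hthree := (isMinOn_iff.mpr hargmin).mirror_step_three_point hPconv (hψgrad ηhat hηhat)
    hηhat hη
  have hstrong : σ / 2 * ‖ηtil - ηhat‖ ^ 2 ≤ bregmanDiv ψ ψ' ηhat ηtil := by
    rw [norm_sub_rev, bregmanDiv]
    linarith [hψsc ηhat hηhat ηtil hηtil]
  have hyoung := real_inner_le_young hα hσ (J' ηtil) (ηtil - ηhat)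
  have hG : ‖J' ηtil‖ ^ 2 ≤ G_J ^ 2 := pow_le_pow_left₀ (norm_nonneg _) (hGJ ηtil hηtil) 2
  have hsplit : ⟪J' ηtil, ηtil - η⟫ = ⟪J' ηtil, ηtil - ηhat⟫ + ⟪J' ηtil, ηhat - η⟫ := by
    rw [← inner_add_right, sub_add_sub_cancel]
  have hstep : ⟪J' ηtil, ηhat - η⟫ ≤ 1 / α * (bregmanDiv ψ ψ' η ηtil - bregmanDiv ψ ψ' η ηhat)
      - σ / (2 * α) * ‖ηtil - ηhat‖ ^ 2 := by
    have hcoef : α * (σ / (2 * α)) = σ / 2 := by field_simp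
    refine le_of_mul_le_mul_left ?_ hα
    rw [mul_sub, ← mul_assoc, ← mul_assoc, mul_one_div_cancel hα.ne', one_mul, hcoef]
    linarith
  have hGscaled := mul_le_mul_of_nonneg_left hG (by positivity : 0 ≤ α / (2 * σ))
  linarith [hJconv ηtil hηtil η hη]

/-- One-step mirror descent progress bound for a convex loss with bounded gradient. -/
theorem mirror_descent_one_step_bound {n : ℕ}
    (P : Set (EuclideanSpace ℝ (Fin n))) (hPconv : Convex ℝ P) (hPcomp : IsCompact P)
    (ψ J : EuclideanSpace ℝ (Fin n) → ℝ)
    (ψ' J' : EuclideanSpace ℝ (Fin n) → EuclideanSpace ℝ (Fin n))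
    (σ G_J α : ℝ) (hσ : 0 < σ) (hα : 0 < α)
    (hψgrad : ∀ x ∈ P, HasGradientAt ψ (ψ' x) x)
    (hψsc : ∀ x ∈ P, ∀ y ∈ P,
      ψ x ≥ ψ y + ⟪ψ' y, x - y⟫ + (σ / 2) * ‖x - y‖ ^ 2)
    (hJgrad : ∀ x ∈ P, HasGradientAt J (J' x) x)
    (hJconv : ∀ x ∈ P, ∀ y ∈ P, J x - J y ≤ ⟪J' x, x - y⟫)
    (hGJ : ∀ x ∈ P, ‖J' x‖ ≤ G_J)
    (D : EuclideanSpace ℝ (Fin n) → EuclideanSpace ℝ (Fin n) → ℝ)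
    (hD : ∀ x y, D x y = ψ x - ψ y - ⟪ψ' y, x - y⟫)
    (ηtil ηhat : EuclideanSpace ℝ (Fin n)) (hηtil : ηtil ∈ P) (hηhat : ηhat ∈ P)
    (hargmin : ∀ η ∈ P,
      α * ⟪J' ηtil, ηhat⟫ + D ηhat ηtil ≤ α * ⟪J' ηtil, η⟫ + D η ηtil) :
    ∀ η ∈ P, J ηtil - J η ≤
      (1 / α) * (D η ηtil - D η ηhat) + (α / (2 * σ)) * G_J ^ 2 :=
  mirror_descent_one_step_bound_general P hPconv ψ J ψ' J' σ G_J α hσ hα hψgrad hψsc hJconv hGJ D hD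
    ηtil ηhat hηtil hηhat hargmin
end
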